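/- Let (X, ν) be a measure space, 1 ≤ p < ∞, and f : X → ℝ measurable. Then ‖f‖_{L^p(X,ν)} = sup_{λ>0} λ · ((ν × 𝓛^1)({(x,y) ∈ X × (0,∞) : |f(x)|/y^{1/p} > λ}))^{1/p}, i.e. the L^p norm of f on X equals the weak-L^p quasi-norm of the function (x,y) ↦ f(x)/y^{1/p} on X × (0,∞) with the product of ν and Lebesgue measure. -/

import Mathlib

open MeasureTheory Filter
open scoped ENNReal Topology

noncomputable section

/-!
The weak-type quasi-norm of `(x, y) ↦ f x / y ^ (1/p)` is attained at every level `λ > 0`: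
the slice of the level set over `x` is the interval `(0, (|f x| / λ) ^ p)`, so by Tonelli the
level set has measure `‖f‖_p^p / λ^p`, and `λ · (‖f‖_p^p / λ^p) ^ (1/p) = ‖f‖_p`.
-/

lemma Real.setOf_lt_div_rpow_inter_Ioi {a lam p : ℝ} (ha : 0 ≤ a) (hlam : 0 < lam) (hp : 0 < p) :
    {y : ℝ | lam < a / y ^ (1 / p)} ∩ Set.Ioi 0 = Set.Ioo 0 ((a / lam) ^ p) := by
  ext y
  rw [Set.mem_inter_iff, Set.mem_Ioo, and_comm]
  refine and_congr_right fun hy => ?_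
  rw [Set.mem_ofPred_eq, lt_div_iff₀ (Real.rpow_pos_of_pos hy _), ← lt_div_iff₀' hlam, one_div,
    Real.rpow_inv_lt_iff_of_pos hy.le (div_nonneg ha hlam.le) hp]

lemma Real.volume_restrict_Ioi_setOf_lt_div_rpow {a lam p : ℝ} (ha : 0 ≤ a) (hlam : 0 < lam)
    (hp : 0 < p) :
    volume.restrict (Set.Ioi 0) {y : ℝ | lam < a / y ^ (1 / p)} =
      ENNReal.ofReal (a ^ p) / ENNReal.ofReal (lam ^ p) := by
  rw [Measure.restrict_apply' measurableSet_Ioi, Real.setOf_lt_div_rpow_inter_Ioi ha hlam hp,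
    Real.volume_Ioo, sub_zero, Real.div_rpow ha hlam.le,
    ENNReal.ofReal_div_of_pos (Real.rpow_pos_of_pos hlam p)]

lemma MeasureTheory.Measure.prod_volume_Ioi_setOf_lt_div_rpow {X : Type*} [MeasurableSpace X]
    (ν : Measure X) {g : X → ℝ} (hg : Measurable g) (hg0 : ∀ x, 0 ≤ g x) {lam p : ℝ}
    (hlam : 0 < lam) (hp : 0 < p) :
    (ν.prod (volume.restrict (Set.Ioi 0))) {q : X × ℝ | lam < g q.1 / q.2 ^ (1 / p)} =
      (∫⁻ x, ENNReal.ofReal (g x ^ p) ∂ν) / ENNReal.ofReal (lam ^ p) := by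
  have hmeas : MeasurableSet {q : X × ℝ | lam < g q.1 / q.2 ^ (1 / p)} :=
    measurableSet_lt measurable_const ((hg.comp measurable_fst).div (by fun_prop))
  have hslice : ∀ x, volume.restrict (Set.Ioi 0)
      (Prod.mk x ⁻¹' {q : X × ℝ | lam < g q.1 / q.2 ^ (1 / p)}) =
        ENNReal.ofReal (g x ^ p) / ENNReal.ofReal (lam ^ p) := fun x =>
    Real.volume_restrict_Ioi_setOf_lt_div_rpow (hg0 x) hlam hp
  simp_rw [Measure.prod_apply hmeas, hslice, div_eq_mul_inv]
  exact lintegral_mul_const' _ _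
    (ENNReal.inv_ne_top.mpr (ENNReal.ofReal_pos.mpr (Real.rpow_pos_of_pos hlam p)).ne')

lemma ENNReal.ofReal_mul_div_ofReal_rpow_rpow_one_div (a : ℝ≥0∞) {lam p : ℝ} (hlam : 0 < lam)
    (hp : 0 < p) :
    ENNReal.ofReal lam * (a / ENNReal.ofReal (lam ^ p)) ^ (1 / p) = a ^ (1 / p) := by
  rw [ENNReal.div_rpow_of_nonneg _ _ (one_div_nonneg.mpr hp.le),
    ← ENNReal.ofReal_rpow_of_pos hlam, ← ENNReal.rpow_mul, mul_one_div_cancel hp.ne',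
    ENNReal.rpow_one, ENNReal.mul_div_cancel (by simpa using hlam) ENNReal.ofReal_ne_top]

theorem stmt18 {X : Type*} [MeasurableSpace X] (ν : Measure X) (p : ℝ) (hp : 1 ≤ p)
    (f : X → ℝ) (hf : Measurable f) :
    (∫⁻ x, ENNReal.ofReal (|f x| ^ p) ∂ν) ^ (1 / p) =
      ⨆ (lam : ℝ) (_ : 0 < lam),
        ENNReal.ofReal lam *
          ((ν.prod (volume.restrict (Set.Ioi (0 : ℝ))))
              {q : X × ℝ | lam < |f q.1| / q.2 ^ (1 / p)}) ^ (1 / p) := by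
  have hp0 : 0 < p := one_pos.trans_le hp
  have hlevel : ∀ lam : ℝ, 0 < lam →
      ENNReal.ofReal lam *
          ((ν.prod (volume.restrict (Set.Ioi (0 : ℝ))))
              {q : X × ℝ | lam < |f q.1| / q.2 ^ (1 / p)}) ^ (1 / p) =
        (∫⁻ x, ENNReal.ofReal (|f x| ^ p) ∂ν) ^ (1 / p) := fun lam hlam => by
    rw [ν.prod_volume_Ioi_setOf_lt_div_rpow hf.abs (fun x => abs_nonneg (f x)) hlam hp0,
      ENNReal.ofReal_mul_div_ofReal_rpow_rpow_one_div _ hlam hp0]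
  exact le_antisymm (le_iSup₂_of_le 1 one_pos (hlevel 1 one_pos).ge)
    (iSup₂_le fun lam hlam => (hlevel lam hlam).le)
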